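/- Let J ≥ 2 and let α ∈ S^{J-1}. For each K ∈ ℕ let Z_K be a random vector in ℝ^J with α + Z_K ∈ S^{J-1} almost surely and let U_1, …, U_K be i.i.d. Uniform(0,1) random variables independent of Z_K. Fix 1 ≤ j ≤ J and define S_K = K^{-1/2}·Σ_{k=1}^K 1(U_k ∈ P_j(α + Z_K) \ P_j(α)). If K·E(‖Z_K‖²) → 0 as K → ∞ (where ‖·‖ is the Euclidean norm), then E(S_K) → 0 and Var(S_K) → 0, and consequently S_K converges to 0 in probability. -/

import Mathlib

open MeasureTheory ProbabilityTheory Filter Topology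

noncomputable section

/-- The `j`-th interval `P_j(h)` of the partition of `[0,1]` induced by `h ∈ S^{J-1}`:
`P_1(h) = [0, h_1]` and `P_j(h) = (h_1 + ⋯ + h_{j-1}, h_1 + ⋯ + h_j]` for `j ≥ 2`. -/
def Pint {J : ℕ} (h : Fin J → ℝ) (j : Fin J) : Set ℝ :=
  if j.val = 0 then Set.Icc 0 (∑ ℓ ∈ Finset.Iic j, h ℓ)
  else Set.Ioc (∑ ℓ ∈ Finset.Iio j, h ℓ) (∑ ℓ ∈ Finset.Iic j, h ℓ)

open Classical in
/-- The conditionally multinomial count vector `T_K`: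
`T_{Kj} = ∑_{k=1}^K 1(U_k ∈ P_j(Π))`. -/
def countVec {Ω : Type*} {J : ℕ} (K : ℕ) (U : ℕ → Ω → ℝ) (Pi : Ω → Fin J → ℝ)
    (ω : Ω) (j : Fin J) : ℝ :=
  ∑ k ∈ Finset.range K, if U k ω ∈ Pint (Pi ω) j then 1 else 0

/-- Convergence in distribution (weak convergence of the laws): the expectations of every
bounded continuous function converge. -/
def TendstoInDistr {Ω E : Type*} [MeasurableSpace Ω] [MeasurableSpace E] [TopologicalSpace E]
    (Pr : Measure Ω) (X : ℕ → Ω → E) (D : Measure E) : Prop :=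
  ∀ f : BoundedContinuousFunction E ℝ,
    Tendsto (fun K => ∫ ω, f (X K ω) ∂Pr) atTop (𝓝 (∫ x, f x ∂D))

/-- `D` is the centered multivariate normal distribution `N(0, S)`: every linear functional
`x ↦ tᵀx` pushes `D` forward to the real Gaussian with mean `0` and variance `tᵀSt`. -/
def IsCenteredGaussian {ι : Type*} [Fintype ι] (D : Measure (ι → ℝ)) (S : Matrix ι ι ℝ) : Prop :=
  IsProbabilityMeasure D ∧
    ∀ t : ι → ℝ, D.map (fun x => ∑ i, t i * x i) =
      gaussianReal 0 (Real.toNNReal (∑ i, ∑ i', t i * S i i' * t i'))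

/-!
Write `D(z) = P_j(α + z) \ P_j(α)`. It lies in two intervals of lengths `|∑_{ℓ<j} z_ℓ|` and
`|∑_{ℓ≤j} z_ℓ|`, so by Cauchy–Schwarz `λ(D(z))² ≤ 4J‖z‖²`. Given `Z_K`, the events
`E_k = {U_k ∈ D(Z_K)}` are independent with probability `λ(D(Z_K))`; hence
`P(E_k) ≤ √(4J E‖Z_K‖²)` and `P(E_k ∩ E_k') ≤ 4J E‖Z_K‖²` for `k ≠ k'`. Expanding the square,
`E(S_K²) ≤ P(E_k) + K·P(E_k ∩ E_k') ≤ √(4J·K E‖Z_K‖²) + 4J·K E‖Z_K‖² → 0`, and convergence to `0`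
in mean square yields all three conclusions.
-/

section Partition

variable {J : ℕ}

lemma measurableSet_setOf_mem_Pint {γ : Type*} [MeasurableSpace γ] {h : γ → Fin J → ℝ}
    (hh : Measurable h) (j : Fin J) : MeasurableSet {p : γ × ℝ | p.2 ∈ Pint (h p.1) j} := by
  have hsum : ∀ t : Finset (Fin J), Measurable fun p : γ × ℝ => ∑ ℓ ∈ t, h p.1 ℓ := fun t =>
    Finset.measurable_sum _ fun ℓ _ => (measurable_pi_apply ℓ).comp (hh.comp measurable_fst)
  unfold Pint
  split_ifs
  · exact (measurableSet_le measurable_const measurable_snd).inter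
      (measurableSet_le measurable_snd (hsum _))
  · exact (measurableSet_lt (hsum _) measurable_snd).inter
      (measurableSet_le measurable_snd (hsum _))

lemma Pint_add_diff_subset (α z : Fin J → ℝ) (j : Fin J) :
    Pint (fun i => α i + z i) j \ Pint α j ⊆
      Set.Ioc (∑ ℓ ∈ Finset.Iio j, α ℓ + ∑ ℓ ∈ Finset.Iio j, z ℓ) (∑ ℓ ∈ Finset.Iio j, α ℓ) ∪
        Set.Ioc (∑ ℓ ∈ Finset.Iic j, α ℓ) (∑ ℓ ∈ Finset.Iic j, α ℓ + ∑ ℓ ∈ Finset.Iic j, z ℓ) := by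
  rintro u ⟨hu, hu'⟩
  simp only [Pint, Finset.sum_add_distrib] at hu hu'
  split_ifs at hu hu'
  · exact Or.inr ⟨lt_of_not_ge fun h => hu' ⟨hu.1, h⟩, hu.2⟩
  · rcases not_and_or.mp hu' with h | h
    · exact Or.inl ⟨hu.1, le_of_not_gt h⟩
    · exact Or.inr ⟨lt_of_not_ge h, hu.2⟩

def endpointShift (j : Fin J) (z : Fin J → ℝ) : ℝ :=
  |∑ ℓ ∈ Finset.Iio j, z ℓ| + |∑ ℓ ∈ Finset.Iic j, z ℓ|

lemma endpointShift_nonneg (j : Fin J) (z : Fin J → ℝ) : 0 ≤ endpointShift j z := by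
  unfold endpointShift; positivity

lemma measurable_endpointShift (j : Fin J) : Measurable (endpointShift j) := by
  unfold endpointShift; fun_prop

lemma measurableSet_setOf_mem_Pint_add_diff (α : Fin J → ℝ) (j : Fin J) :
    MeasurableSet {p : (Fin J → ℝ) × ℝ | p.2 ∈ Pint (fun i => α i + p.1 i) j \ Pint α j} :=
  (measurableSet_setOf_mem_Pint (h := fun (z : Fin J → ℝ) i => α i + z i) (by fun_prop) j).diff
    (measurableSet_setOf_mem_Pint (h := fun _ => α) measurable_const j)

lemma volume_Pint_add_diff_le (α z : Fin J → ℝ) (j : Fin J) :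
    volume (Pint (fun i => α i + z i) j \ Pint α j) ≤ ENNReal.ofReal (endpointShift j z) := by
  refine (measure_mono (Pint_add_diff_subset α z j)).trans <| (measure_union_le _ _).trans ?_
  rw [Real.volume_Ioc, Real.volume_Ioc, endpointShift,
    ENNReal.ofReal_add (abs_nonneg _) (abs_nonneg _)]
  gcongr
  · linarith [neg_abs_le (∑ ℓ ∈ Finset.Iio j, z ℓ)]
  · linarith [le_abs_self (∑ ℓ ∈ Finset.Iic j, z ℓ)]

lemma sq_sum_le_mul_sum_sq (z : Fin J → ℝ) (t : Finset (Fin J)) :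
    (∑ i ∈ t, z i) ^ 2 ≤ J * ∑ i, z i ^ 2 := by
  have hcard : (t.card : ℝ) ≤ J := by exact_mod_cast (Finset.card_le_univ t).trans_eq (by simp)
  calc (∑ i ∈ t, z i) ^ 2 ≤ t.card * ∑ i ∈ t, z i ^ 2 := sq_sum_le_card_mul_sum_sq
    _ ≤ J * ∑ i, z i ^ 2 := by
      gcongr
      exact Finset.subset_univ t

lemma sq_endpointShift_le (j : Fin J) (z : Fin J → ℝ) :
    endpointShift j z ^ 2 ≤ 4 * J * ∑ i, z i ^ 2 := by
  have h := sq_sum_le_mul_sum_sq z (Finset.Iio j)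
  have h' := sq_sum_le_mul_sum_sq z (Finset.Iic j)
  rw [← sq_abs] at h h'
  unfold endpointShift
  nlinarith [sq_nonneg (|∑ i ∈ Finset.Iio j, z i| - |∑ i ∈ Finset.Iic j, z i|)]

variable {Ω : Type*} [MeasurableSpace Ω] {μ : Measure Ω} {Z : Ω → Fin J → ℝ}

lemma memLp_endpointShift_comp (j : Fin J) (hZ : Measurable Z)
    (hY : Integrable (fun ω => ∑ i, Z ω i ^ 2) μ) :
    MemLp (fun ω => endpointShift j (Z ω)) 2 μ := by
  have hm := (measurable_endpointShift j).comp hZ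
  refine (memLp_two_iff_integrable_sq hm.aestronglyMeasurable).2 <|
    (hY.const_mul (4 * J)).mono' (hm.pow_const 2).aestronglyMeasurable (ae_of_all _ fun ω => ?_)
  rw [Real.norm_of_nonneg (sq_nonneg _)]
  exact sq_endpointShift_le j (Z ω)

lemma integral_sq_endpointShift_comp_le (j : Fin J) (hZ : Measurable Z)
    (hY : Integrable (fun ω => ∑ i, Z ω i ^ 2) μ) :
    ∫ ω, endpointShift j (Z ω) ^ 2 ∂μ ≤ 4 * J * ∫ ω, ∑ i, Z ω i ^ 2 ∂μ := by
  rw [← integral_const_mul]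
  exact integral_mono (memLp_endpointShift_comp j hZ hY).integrable_sq (hY.const_mul _)
    fun ω => sq_endpointShift_le j (Z ω)

end Partition

lemma abs_le_abs_add_one_of_add_mem_stdSimplex {ι : Type*} [Fintype ι] {a z : ι → ℝ}
    (h : (fun i => a i + z i) ∈ stdSimplex ℝ ι) (i : ι) : |z i| ≤ |a i| + 1 := by
  have h0 : 0 ≤ a i + z i := h.1 i
  have h1 : a i + z i ≤ 1 := stdSimplex.le_one ⟨_, h⟩ i
  exact abs_le.2 ⟨by linarith [le_abs_self (a i)], by linarith [neg_abs_le (a i)]⟩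

lemma integrable_sum_sq_of_add_mem_stdSimplex {Ω ι : Type*} [MeasurableSpace Ω] [Fintype ι]
    {μ : Measure Ω} [IsFiniteMeasure μ] {a : ι → ℝ} {Z : Ω → ι → ℝ} (hZ : Measurable Z)
    (h : ∀ᵐ ω ∂μ, (fun i => a i + Z ω i) ∈ stdSimplex ℝ ι) :
    Integrable (fun ω => ∑ i, Z ω i ^ 2) μ := by
  refine integrable_finsetSum _ fun i _ => ?_
  refine Integrable.of_bound
    (((measurable_pi_apply i).comp hZ).pow_const 2).aestronglyMeasurable ((|a i| + 1) ^ 2) ?_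
  filter_upwards [h] with ω hω
  rw [Real.norm_eq_abs, abs_pow]
  exact pow_le_pow_left₀ (abs_nonneg _) (abs_le_abs_add_one_of_add_mem_stdSimplex hω i) 2

section Independence

variable {Ω γ δ : Type*} [MeasurableSpace Ω] [MeasurableSpace γ] [MeasurableSpace δ]
  {Pr : Measure Ω} [IsFiniteMeasure Pr]

lemma ProbabilityTheory.IndepFun.measure_prodMk_mem {X : Ω → γ} {Y : Ω → δ} (h : IndepFun X Y Pr)
    (hX : Measurable X) (hY : Measurable Y) {s : Set (γ × δ)} (hs : MeasurableSet s) :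
    Pr {ω | (X ω, Y ω) ∈ s} = ∫⁻ x, Pr.map Y (Prod.mk x ⁻¹' s) ∂Pr.map X := by
  rw [← Measure.prod_apply hs, ← h.map_prod_eq_prod_map_map hX.aemeasurable hY.aemeasurable,
    Measure.map_apply (hX.prodMk hY) hs]
  rfl

lemma ProbabilityTheory.IndepFun.measureReal_prodMk_mem_le {X : Ω → γ} {Y : Ω → δ}
    (h : IndepFun X Y Pr) (hX : Measurable X) (hY : Measurable Y) {s : Set (γ × δ)}
    (hs : MeasurableSet s) {w : γ → ℝ} (hw : ∀ x, 0 ≤ w x) (hws : ∀ x, Pr.map Y (Prod.mk x ⁻¹' s) ≤ ENNReal.ofReal (w x))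
    (hwX : Integrable (fun ω => w (X ω)) Pr) :
    Pr.real {ω | (X ω, Y ω) ∈ s} ≤ ∫ ω, w (X ω) ∂Pr := by
  refine ENNReal.toReal_le_of_le_ofReal (integral_nonneg fun ω => hw _) ?_
  calc Pr {ω | (X ω, Y ω) ∈ s}
      ≤ ∫⁻ x, ENNReal.ofReal (w x) ∂Pr.map X := (h.measure_prodMk_mem hX hY hs).trans_le
        (lintegral_mono hws)
    _ ≤ ∫⁻ ω, ENNReal.ofReal (w (X ω)) ∂Pr := lintegral_map_le _ _
    _ = ENNReal.ofReal (∫ ω, w (X ω) ∂Pr) :=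
      (ofReal_integral_eq_lintegral_ofReal hwX (ae_of_all _ fun ω => hw _)).symm

end Independence

section SecondMoment

variable {Ω : Type*} [MeasurableSpace Ω] {μ : Measure Ω}

lemma sq_integral_le_integral_sq [IsProbabilityMeasure μ] {X : Ω → ℝ} (hX : MemLp X 2 μ) :
    (∫ ω, X ω ∂μ) ^ 2 ≤ ∫ ω, X ω ^ 2 ∂μ :=
  sub_nonneg.1 <| (variance_eq_sub hX).symm.trans_ge (variance_nonneg X μ)

lemma abs_integral_le_sqrt_integral_sq [IsProbabilityMeasure μ] {X : Ω → ℝ} (hX : MemLp X 2 μ) :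
    |∫ ω, X ω ∂μ| ≤ √(∫ ω, X ω ^ 2 ∂μ) :=
  Real.abs_le_sqrt (sq_integral_le_integral_sq hX)

lemma integral_sq_sum_indicator_le [IsFiniteMeasure μ] {E : ℕ → Set Ω}
    (hE : ∀ k, MeasurableSet (E k)) {a b : ℝ} (ha : ∀ k, μ.real (E k) ≤ a) (hb : 0 ≤ b)
    (hab : ∀ k k', k ≠ k' → μ.real (E k ∩ E k') ≤ b) (K : ℕ) :
    ∫ ω, (∑ k ∈ Finset.range K, (E k).indicator 1 ω) ^ 2 ∂μ ≤ K * (a + K * b) := by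
  have hint : ∀ k k', Integrable ((E k ∩ E k').indicator (1 : Ω → ℝ)) μ := fun k k' =>
    (integrable_const 1).indicator ((hE k).inter (hE k'))
  have hsq : ∀ ω, (∑ k ∈ Finset.range K, (E k).indicator (1 : Ω → ℝ) ω) ^ 2 =
      ∑ k ∈ Finset.range K, ∑ k' ∈ Finset.range K, (E k ∩ E k').indicator 1 ω := fun ω => by
    simp only [sq, Finset.sum_mul_sum, Set.inter_indicator_one, Pi.mul_apply]
  have hterm : ∀ k k', μ.real (E k ∩ E k') ≤ (if k' = k then a else 0) + b := fun k k' => by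
    split_ifs with h
    · rw [h, Set.inter_self]; linarith [ha k]
    · simpa using hab k k' (Ne.symm h)
  simp_rw [hsq]
  rw [integral_finsetSum _ fun k _ => integrable_finsetSum _ fun k' _ => hint k k']
  calc ∑ k ∈ Finset.range K, ∫ ω, ∑ k' ∈ Finset.range K, (E k ∩ E k').indicator 1 ω ∂μ
      = ∑ k ∈ Finset.range K, ∑ k' ∈ Finset.range K, μ.real (E k ∩ E k') := by
        refine Finset.sum_congr rfl fun k _ => ?_
        rw [integral_finsetSum _ fun k' _ => hint k k']
        simp_rw [integral_indicator_one ((hE k).inter (hE _))]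
    _ ≤ ∑ k ∈ Finset.range K, ∑ k' ∈ Finset.range K, ((if k' = k then a else 0) + b) := by
        gcongr with k _ k' _
        exact hterm k k'
    _ = K * (a + K * b) := by
        simp only [Finset.sum_add_distrib, Finset.sum_ite_eq', Finset.sum_const,
          Finset.card_range, nsmul_eq_mul]
        rw [Finset.sum_ite_of_true fun k hk => hk]
        simp only [Finset.sum_const, Finset.card_range, nsmul_eq_mul]
        ring

lemma memLp_sum_indicator_div [IsFiniteMeasure μ] {E : ℕ → Set Ω}
    (hE : ∀ k, MeasurableSet (E k)) (p : ENNReal) (K : ℕ) (c : ℝ) :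
    MemLp (fun ω => (∑ k ∈ Finset.range K, (E k).indicator 1 ω) / c) p μ := by
  have hEk : ∀ k, MemLp ((E k).indicator (1 : Ω → ℝ)) p μ := fun k =>
    memLp_indicator_const p (hE k) (1 : ℝ) (Or.inr (measure_ne_top μ _))
  have hN := memLp_finsetSum (Finset.range K) fun k _ => hEk k
  simpa only [div_eq_mul_inv] using hN.mul_const c⁻¹

end SecondMoment

section Sample

variable {Ω γ δ : Type*} [MeasurableSpace Ω] [MeasurableSpace γ] [MeasurableSpace δ]
  {Pr : Measure Ω} [IsProbabilityMeasure Pr] {Z : Ω → γ} {U : ℕ → Ω → δ} {ν : Measure δ}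
  {s : Set (γ × δ)} {w : γ → ℝ}

lemma measureReal_prodMk_mem_le_integral (hZ : Measurable Z) (hU : ∀ k, Measurable (U k))
    (hUZ : IndepFun (fun ω k => U k ω) Z Pr) (hUν : ∀ k, Pr.map (U k) = ν)
    (hs : MeasurableSet s) (hw : ∀ x, 0 ≤ w x)
    (hws : ∀ x, ν (Prod.mk x ⁻¹' s) ≤ ENNReal.ofReal (w x))
    (hwZ : Integrable (fun ω => w (Z ω)) Pr) (k : ℕ) :
    Pr.real {ω | (Z ω, U k ω) ∈ s} ≤ ∫ ω, w (Z ω) ∂Pr := by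
  have hind : IndepFun Z (U k) Pr := hUZ.symm.comp measurable_id (measurable_pi_apply k)
  exact hind.measureReal_prodMk_mem_le hZ (hU k) hs hw (by rwa [hUν]) hwZ

lemma measureReal_prodMk_mem_inter_le_integral_sq (hZ : Measurable Z) (hU : ∀ k, Measurable (U k))
    (hUZ : IndepFun (fun ω k => U k ω) Z Pr) (hUi : iIndepFun U Pr)
    (hUν : ∀ k, Pr.map (U k) = ν) (hs : MeasurableSet s) (hw : ∀ x, 0 ≤ w x)
    (hws : ∀ x, ν (Prod.mk x ⁻¹' s) ≤ ENNReal.ofReal (w x))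
    (hwZ : Integrable (fun ω => w (Z ω) ^ 2) Pr) {k k' : ℕ} (hkk' : k ≠ k') :
    Pr.real ({ω | (Z ω, U k ω) ∈ s} ∩ {ω | (Z ω, U k' ω) ∈ s}) ≤ ∫ ω, w (Z ω) ^ 2 ∂Pr := by
  have : IsProbabilityMeasure ν := hUν k ▸ Measure.isProbabilityMeasure_map (hU k).aemeasurable
  have hind : IndepFun Z (fun ω => (U k ω, U k' ω)) Pr :=
    hUZ.symm.comp measurable_id ((measurable_pi_apply k).prodMk (measurable_pi_apply k'))
  have hlaw : Pr.map (fun ω => (U k ω, U k' ω)) = ν.prod ν := by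
    rw [(hUi.indepFun hkk').map_prod_eq_prod_map_map (hU k).aemeasurable (hU k').aemeasurable,
      hUν, hUν]
  have hs₂ : MeasurableSet {p : γ × δ × δ | (p.1, p.2.1) ∈ s ∧ (p.1, p.2.2) ∈ s} :=
    (measurable_fst.prodMk (measurable_fst.comp measurable_snd) hs).inter
      (measurable_fst.prodMk (measurable_snd.comp measurable_snd) hs)
  refine hind.measureReal_prodMk_mem_le hZ ((hU k).prodMk (hU k')) hs₂
    (fun x => sq_nonneg (w x)) (fun x => ?_) hwZ
  rw [hlaw, ENNReal.ofReal_pow (hw x), sq]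
  exact (Measure.prod_prod _ _).trans_le (mul_le_mul' (hws x) (hws x))

theorem integral_sq_sum_indicator_prodMk_div_sqrt_le (hZ : Measurable Z)
    (hU : ∀ k, Measurable (U k)) (hUZ : IndepFun (fun ω k => U k ω) Z Pr)
    (hUi : iIndepFun U Pr) (hUν : ∀ k, Pr.map (U k) = ν) (hs : MeasurableSet s)
    (hw : ∀ x, 0 ≤ w x) (hws : ∀ x, ν (Prod.mk x ⁻¹' s) ≤ ENNReal.ofReal (w x))
    (hwZ : MemLp (fun ω => w (Z ω)) 2 Pr) (K : ℕ) :
    ∫ ω, ((∑ k ∈ Finset.range K, {ω | (Z ω, U k ω) ∈ s}.indicator 1 ω) / √K) ^ 2 ∂Pr ≤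
      √(∫ ω, w (Z ω) ^ 2 ∂Pr) + K * ∫ ω, w (Z ω) ^ 2 ∂Pr := by
  have hE : ∀ k, MeasurableSet {ω | (Z ω, U k ω) ∈ s} := fun k => (hZ.prodMk (hU k)) hs
  have ha : ∀ k, Pr.real {ω | (Z ω, U k ω) ∈ s} ≤ √(∫ ω, w (Z ω) ^ 2 ∂Pr) := fun k =>
    (measureReal_prodMk_mem_le_integral hZ hU hUZ hUν hs hw hws (hwZ.integrable one_le_two)
      k).trans <| (le_abs_self _).trans (abs_integral_le_sqrt_integral_sq hwZ)
  have hcount := integral_sq_sum_indicator_le hE ha (integral_nonneg fun ω => sq_nonneg _)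
    (fun k k' => measureReal_prodMk_mem_inter_le_integral_sq hZ hU hUZ hUi hUν hs hw hws
      hwZ.integrable_sq) K
  simp_rw [div_pow, Real.sq_sqrt (Nat.cast_nonneg K)]
  rw [integral_div]
  exact div_le_of_le_mul₀ (Nat.cast_nonneg K) (by positivity) (hcount.trans_eq (mul_comm _ _))

end Sample

theorem integral_sq_sum_indicator_Pint_div_sqrt_le {J : ℕ} {α : Fin J → ℝ} {j : Fin J}
    {Ω : Type*} [MeasurableSpace Ω] {Pr : Measure Ω} [IsProbabilityMeasure Pr]
    {Z : Ω → Fin J → ℝ} {U : ℕ → Ω → ℝ} (hZ : Measurable Z)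
    (hZval : ∀ᵐ ω ∂Pr, (fun i => α i + Z ω i) ∈ stdSimplex ℝ (Fin J))
    (hU : ∀ k, Measurable (U k)) (hUunif : ∀ k, Pr.map (U k) = volume.restrict (Set.Icc 0 1))
    (hUi : iIndepFun U Pr) (hUZ : IndepFun (fun ω k => U k ω) Z Pr) {K : ℕ} (hK : 1 ≤ K) :
    ∫ ω, ((∑ k ∈ Finset.range K,
        {ω | U k ω ∈ Pint (fun i => α i + Z ω i) j \ Pint α j}.indicator 1 ω) / √K) ^ 2 ∂Pr ≤
      √(4 * J * (K * ∫ ω, ∑ i, Z ω i ^ 2 ∂Pr)) + 4 * J * (K * ∫ ω, ∑ i, Z ω i ^ 2 ∂Pr) := by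
  have hY := integrable_sum_sq_of_add_mem_stdSimplex hZ hZval
  have hb := integral_sq_endpointShift_comp_le j hZ hY
  have he : 0 ≤ ∫ ω, ∑ i, Z ω i ^ 2 ∂Pr := integral_nonneg fun ω => by positivity
  have hK' : (1 : ℝ) ≤ K := by exact_mod_cast hK
  refine (integral_sq_sum_indicator_prodMk_div_sqrt_le hZ hU hUZ hUi hUunif
    (measurableSet_setOf_mem_Pint_add_diff α j) (endpointShift_nonneg j)
    (fun z => (Measure.restrict_le_self _).trans (volume_Pint_add_diff_le α z j))
    (memLp_endpointShift_comp j hZ hY) K).trans (add_le_add ?_ ?_)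
  · exact Real.sqrt_le_sqrt <|
      hb.trans (mul_le_mul_of_nonneg_left (le_mul_of_one_le_left he hK') (by positivity))
  · exact (mul_le_mul_of_nonneg_left hb (by positivity)).trans_eq (by ring)
section MeanSquare

variable {Ω ι : Type*} [MeasurableSpace Ω] {μ : Measure Ω} {l : Filter ι} {X : ι → Ω → ℝ}

lemma tendsto_integral_of_tendsto_integral_sq [IsProbabilityMeasure μ]
    (hX : ∀ i, MemLp (X i) 2 μ) (h : Tendsto (fun i => ∫ ω, X i ω ^ 2 ∂μ) l (𝓝 0)) :
    Tendsto (fun i => ∫ ω, X i ω ∂μ) l (𝓝 0) := by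
  have hsqrt : Tendsto (fun i => √(∫ ω, X i ω ^ 2 ∂μ)) l (𝓝 0) := by
    simpa using h.sqrt
  exact squeeze_zero_norm (fun i => abs_integral_le_sqrt_integral_sq (hX i)) hsqrt

lemma tendsto_variance_of_tendsto_integral_sq [IsProbabilityMeasure μ]
    (hX : ∀ i, AEStronglyMeasurable (X i) μ) (h : Tendsto (fun i => ∫ ω, X i ω ^ 2 ∂μ) l (𝓝 0)) :
    Tendsto (fun i => variance (X i) μ) l (𝓝 0) :=
  squeeze_zero (fun _ => variance_nonneg _ _) (fun i => variance_le_expectation_sq (hX i)) h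

lemma tendstoInMeasure_zero_of_tendsto_integral_sq [IsFiniteMeasure μ]
    (hX : ∀ i, Integrable (fun ω => X i ω ^ 2) μ)
    (h : Tendsto (fun i => ∫ ω, X i ω ^ 2 ∂μ) l (𝓝 0)) :
    TendstoInMeasure μ X l fun _ => 0 := by
  refine tendstoInMeasure_iff_dist.2 fun ε hε => ?_
  have hmarkov : ∀ i, μ {ω | ε ≤ dist (X i ω) 0} ≤
      ENNReal.ofReal ((∫ ω, X i ω ^ 2 ∂μ) / ε ^ 2) := fun i => by
    have hsub : {ω | ε ≤ dist (X i ω) 0} ⊆ {ω | ε ^ 2 ≤ X i ω ^ 2} := fun ω hω => by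
      rw [Set.mem_ofPred_eq, Real.dist_0_eq_abs] at hω
      exact (pow_le_pow_left₀ hε.le hω 2).trans_eq (sq_abs _)
    have h := mul_meas_ge_le_integral_of_nonneg (ae_of_all _ fun ω => sq_nonneg (X i ω)) (hX i)
      (ε ^ 2)
    calc μ {ω | ε ≤ dist (X i ω) 0} ≤ μ {ω | ε ^ 2 ≤ X i ω ^ 2} := measure_mono hsub
      _ = ENNReal.ofReal (μ.real {ω | ε ^ 2 ≤ X i ω ^ 2}) :=
        (ENNReal.ofReal_toReal (measure_ne_top _ _)).symm
      _ ≤ ENNReal.ofReal ((∫ ω, X i ω ^ 2 ∂μ) / ε ^ 2) :=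
        ENNReal.ofReal_le_ofReal ((le_div_iff₀' (by positivity)).2 h)
  have hlim : Tendsto (fun i => ENNReal.ofReal ((∫ ω, X i ω ^ 2 ∂μ) / ε ^ 2)) l (𝓝 0) := by
    simpa using ENNReal.tendsto_ofReal (h.div_const (ε ^ 2))
  exact tendsto_of_tendsto_of_tendsto_of_le_of_le tendsto_const_nhds hlim (fun _ => zero_le)
    hmarkov

end MeanSquare

open Classical in
theorem sdiff_indicator_sum_negligible_general
    {Ω : Type*} [MeasurableSpace Ω] (Pr : Measure Ω) [IsProbabilityMeasure Pr]
    (J : ℕ) (α : Fin J → ℝ)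
    (j : Fin J)
    (Z : ℕ → Ω → Fin J → ℝ) (hZmeas : ∀ K, Measurable (Z K))
    (hZval : ∀ K, ∀ᵐ ω ∂Pr, (fun j' => α j' + Z K ω j') ∈ stdSimplex ℝ (Fin J))
    (U : ℕ → ℕ → Ω → ℝ) (hUmeas : ∀ K k, Measurable (U K k))
    (hUunif : ∀ K k, Pr.map (U K k) = volume.restrict (Set.Icc (0:ℝ) 1))
    (hUiid : ∀ K, iIndepFun (U K) Pr)
    (hUZindep : ∀ K, IndepFun (fun ω k => U K k ω) (Z K) Pr)
    (hZlim : Tendsto (fun K : ℕ => (K : ℝ) * ∫ ω, ∑ j', (Z K ω j') ^ 2 ∂Pr) atTop (𝓝 0)) :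
    Tendsto (fun K : ℕ =>
        ∫ ω, (∑ k ∈ Finset.range K,
          if U K k ω ∈ Pint (fun j' => α j' + Z K ω j') j \ Pint α j then (1:ℝ) else 0)
            / Real.sqrt K ∂Pr)
      atTop (𝓝 0) ∧
    Tendsto (fun K : ℕ =>
        variance (fun ω => (∑ k ∈ Finset.range K,
          if U K k ω ∈ Pint (fun j' => α j' + Z K ω j') j \ Pint α j then (1:ℝ) else 0)
            / Real.sqrt K) Pr)
      atTop (𝓝 0) ∧
    TendstoInMeasure Pr
      (fun K ω => (∑ k ∈ Finset.range K,
          if U K k ω ∈ Pint (fun j' => α j' + Z K ω j') j \ Pint α j then (1:ℝ) else 0)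
            / Real.sqrt K)
      atTop (fun _ => 0) := by
  set S : ℕ → Ω → ℝ := fun K ω => (∑ k ∈ Finset.range K,
    {ω | U K k ω ∈ Pint (fun i => α i + Z K ω i) j \ Pint α j}.indicator 1 ω) / √K
  have hS_eq : ∀ K ω, (∑ k ∈ Finset.range K,
      if U K k ω ∈ Pint (fun j' => α j' + Z K ω j') j \ Pint α j then (1:ℝ) else 0) / √K =
        S K ω := fun K ω => by
    -- not `rfl`: the `if` and `Set.indicator` use different `Decidable` instances
    simp only [S, Set.indicator_apply, Set.mem_ofPred_eq, Pi.one_apply]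
  simp only [hS_eq]
  have hS_memLp : ∀ K, MemLp (S K) 2 Pr := fun K => memLp_sum_indicator_div
    (fun k => (hZmeas K).prodMk (hUmeas K k) (measurableSet_setOf_mem_Pint_add_diff α j)) 2 K _
  have hL2 : Tendsto (fun K => ∫ ω, S K ω ^ 2 ∂Pr) atTop (𝓝 0) := by
    have hlim := ((hZlim.const_mul (4 * (J:ℝ))).sqrt).add (hZlim.const_mul (4 * (J:ℝ)))
    simp only [mul_zero, Real.sqrt_zero, add_zero] at hlim
    refine tendsto_of_tendsto_of_tendsto_of_le_of_le' tendsto_const_nhds hlim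
      (Eventually.of_forall fun K => integral_nonneg fun ω => sq_nonneg _) ?_
    filter_upwards [eventually_ge_atTop 1] with K hK
    exact integral_sq_sum_indicator_Pint_div_sqrt_le (hZmeas K) (hZval K) (hUmeas K)
      (hUunif K) (hUiid K) (hUZindep K) hK
  exact ⟨tendsto_integral_of_tendsto_integral_sq hS_memLp hL2,
    tendsto_variance_of_tendsto_integral_sq (fun K => (hS_memLp K).1) hL2,
    tendstoInMeasure_zero_of_tendsto_integral_sq (fun K => (hS_memLp K).integrable_sq) hL2⟩

open Classical in
/-- If `K·E‖Z_K‖² → 0`, then for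
`S_K = K^{-1/2}·Σ_{k=1}^K 1(U_k ∈ P_j(α + Z_K) \ P_j(α))` one has `E(S_K) → 0`,
`Var(S_K) → 0` and `S_K → 0` in probability. -/
theorem sdiff_indicator_sum_negligible
    {Ω : Type*} [MeasurableSpace Ω] (Pr : Measure Ω) [IsProbabilityMeasure Pr]
    (J : ℕ) (hJ : 2 ≤ J) (α : Fin J → ℝ) (hα : α ∈ stdSimplex ℝ (Fin J))
    (j : Fin J)
    (Z : ℕ → Ω → Fin J → ℝ) (hZmeas : ∀ K, Measurable (Z K))
    (hZval : ∀ K, ∀ᵐ ω ∂Pr, (fun j' => α j' + Z K ω j') ∈ stdSimplex ℝ (Fin J))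
    (U : ℕ → ℕ → Ω → ℝ) (hUmeas : ∀ K k, Measurable (U K k))
    (hUunif : ∀ K k, Pr.map (U K k) = volume.restrict (Set.Icc (0:ℝ) 1))
    (hUiid : ∀ K, iIndepFun (U K) Pr)
    (hUZindep : ∀ K, IndepFun (fun ω k => U K k ω) (Z K) Pr)
    (hZlim : Tendsto (fun K : ℕ => (K : ℝ) * ∫ ω, ∑ j', (Z K ω j') ^ 2 ∂Pr) atTop (𝓝 0)) :
    Tendsto (fun K : ℕ =>
        ∫ ω, (∑ k ∈ Finset.range K,
          if U K k ω ∈ Pint (fun j' => α j' + Z K ω j') j \ Pint α j then (1:ℝ) else 0)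
            / Real.sqrt K ∂Pr)
      atTop (𝓝 0) ∧
    Tendsto (fun K : ℕ =>
        variance (fun ω => (∑ k ∈ Finset.range K,
          if U K k ω ∈ Pint (fun j' => α j' + Z K ω j') j \ Pint α j then (1:ℝ) else 0)
            / Real.sqrt K) Pr)
      atTop (𝓝 0) ∧
    TendstoInMeasure Pr
      (fun K ω => (∑ k ∈ Finset.range K,
          if U K k ω ∈ Pint (fun j' => α j' + Z K ω j') j \ Pint α j then (1:ℝ) else 0)
            / Real.sqrt K)
      atTop (fun _ => 0) :=
  sdiff_indicator_sum_negligible_general Pr J α j Z hZmeas hZval U hUmeas hUunif hUiid hUZindep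
    hZlim

end
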